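/- Let p ≥ 3 be an odd integer. In ℚ(s), writing t = s², the following identity holds: Θ̂_{p,2}(s) = (t³/(t² − 1)³) · ( ((p−1)/2)·(t^{p+1} − t^{−p−1}) − ((p+1)/2)·(t^{p−1} − t^{−p+1}) ). Equivalently, Θ̂_{p,2}(s) = (t²/(t² − 1)²)·( ((p−1)/2)·(t^p + t^{−p}) − (t^{p−1} − t^{−(p−1)})/(t − t^{−1}) ). -/

import Mathlib

/-!
For `q = 2` everything collapses. Put `a = s^p`, `A = a + a⁻¹`, `B = a - a⁻¹`. Then
`Δ_{p,2}(s) = A/(s + s⁻¹)`, and since `2(a² + a⁻²) = A² + B²`, `φ_{p,2}(s) = -B/A`, so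
`ψ_{p,2}(s) = -B/(s + s⁻¹)`. Multiplying by `ψ_{2,p} = Δ_{p,2} φ_{2,p}` turns `Θ̂_{p,2}(s)` into
`(p (t^p + t^{-p}) - (t^p - t^{-p})(t + t⁻¹)/(t - t⁻¹)) / (2 (t - t⁻¹)²)` with `t = s²`, and both
closed forms follow by clearing denominators. In `ℚ(s)` no denominator vanishes because `s` is
transcendental.
-/

/-- `Δ_{p,q}(s) = ((s^{pq} − s^{−pq})(s − s^{−1})) / ((s^p − s^{−p})(s^q − s^{−q}))`,
the Alexander polynomial of the `(p,q)` torus knot evaluated at `t = s²`. -/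
noncomputable def torusDelta {F : Type*} [Field F] (p q : ℕ) (s : F) : F :=
  ((s ^ (p * q) - s⁻¹ ^ (p * q)) * (s - s⁻¹)) / ((s ^ p - s⁻¹ ^ p) * (s ^ q - s⁻¹ ^ q))

/-- `φ_{p,q}(s) = (s^p + s^{−p})/(s^p − s^{−p}) − q·(s^{pq} + s^{−pq})/(s^{pq} − s^{−pq})`. -/
noncomputable def torusPhi {F : Type*} [Field F] (p q : ℕ) (s : F) : F :=
  (s ^ p + s⁻¹ ^ p) / (s ^ p - s⁻¹ ^ p) -
    (q : F) * ((s ^ (p * q) + s⁻¹ ^ (p * q)) / (s ^ (p * q) - s⁻¹ ^ (p * q)))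

/-- `ψ_{p,q}(s) = Δ_{p,q}(s)·φ_{p,q}(s)`. -/
noncomputable def torusPsi {F : Type*} [Field F] (p q : ℕ) (s : F) : F :=
  torusDelta p q s * torusPhi p q s

/-- The 2-loop polynomial of the torus knot `T(p,q)`:
`Θ_{p,q}(s₁,s₂,s₃) = −(1/4)·Σ_{(i,j,k)} ψ_{p,q}(s_i)·ψ_{q,p}(s_j)·Δ_{p,q}(s_k)`,
the sum running over all six permutations `(i,j,k)` of `(1,2,3)`. -/
noncomputable def torusTheta {F : Type*} [Field F] (p q : ℕ) (s₁ s₂ s₃ : F) : F :=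
  -(1/4) * (torusPsi p q s₁ * torusPsi q p s₂ * torusDelta p q s₃
    + torusPsi p q s₁ * torusPsi q p s₃ * torusDelta p q s₂
    + torusPsi p q s₂ * torusPsi q p s₁ * torusDelta p q s₃
    + torusPsi p q s₂ * torusPsi q p s₃ * torusDelta p q s₁
    + torusPsi p q s₃ * torusPsi q p s₁ * torusDelta p q s₂
    + torusPsi p q s₃ * torusPsi q p s₂ * torusDelta p q s₁)

/-- The reduced 2-loop polynomial of the torus knot `T(p,q)`:
`Θ̂_{p,q}(s) = ψ_{p,q}(s)·ψ_{q,p}(s) / (2(s − s^{−1})²)`. -/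
noncomputable def torusThetaHat {F : Type*} [Field F] (p q : ℕ) (s : F) : F :=
  torusPsi p q s * torusPsi q p s / (2 * (s - s⁻¹) ^ 2)

theorem RatFunc.X_pow_ne_one {K : Type*} [Field K] {n : ℕ} (hn : n ≠ 0) :
    (RatFunc.X : RatFunc K) ^ n ≠ 1 := fun h =>
  (RatFunc.transcendental_X.pow (Nat.pos_of_ne_zero hn)) (h ▸ isAlgebraic_one)

section

variable {F : Type*} [Field F]

theorem torusDelta_comm (p q : ℕ) (s : F) : torusDelta q p s = torusDelta p q s := by
  simp only [torusDelta, mul_comm p q, mul_comm (s ^ q - s⁻¹ ^ q)]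

theorem pow_sub_inv_pow_mul_pow_add_inv_pow_ne_zero {x : F} (hx : x ≠ 0) {n : ℕ}
    (h : x ^ (4 * n) ≠ 1) : (x ^ n - x⁻¹ ^ n) * (x ^ n + x⁻¹ ^ n) ≠ 0 := by
  have hxn : x ^ (2 * n) ≠ 0 := pow_ne_zero _ hx
  have : (x ^ n - x⁻¹ ^ n) * (x ^ n + x⁻¹ ^ n) = (x ^ (4 * n) - 1) / x ^ (2 * n) := by
    rw [inv_pow]; field_simp; ring
  rw [this]
  exact div_ne_zero (sub_ne_zero.2 h) hxn

variable {p : ℕ} {s : F}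

theorem torusDelta_two_right (hs : s - s⁻¹ ≠ 0) (hs' : s + s⁻¹ ≠ 0) (ha : s ^ p - s⁻¹ ^ p ≠ 0) :
    torusDelta p 2 s = (s ^ p + s⁻¹ ^ p) / (s + s⁻¹) := by
  rw [torusDelta, pow_mul, pow_mul, sq_sub_sq, sq_sub_sq]
  -- as independent atoms, `s⁻¹` and the powers stay factored under `field_simp`
  generalize s ^ p = a at *
  generalize s⁻¹ ^ p = b at *
  generalize s⁻¹ = r at *
  field_simp

theorem torusPhi_two_right (ha : s ^ p - s⁻¹ ^ p ≠ 0) (ha' : s ^ p + s⁻¹ ^ p ≠ 0) :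
    torusPhi p 2 s = -(s ^ p - s⁻¹ ^ p) / (s ^ p + s⁻¹ ^ p) := by
  rw [torusPhi, pow_mul, pow_mul, sq_sub_sq]
  generalize s ^ p = a at *
  generalize s⁻¹ ^ p = b at *
  field_simp
  ring

theorem torusPsi_two_right (hs : s - s⁻¹ ≠ 0) (hs' : s + s⁻¹ ≠ 0) (ha : s ^ p - s⁻¹ ^ p ≠ 0)
    (ha' : s ^ p + s⁻¹ ^ p ≠ 0) :
    torusPsi p 2 s = -(s ^ p - s⁻¹ ^ p) / (s + s⁻¹) := by
  rw [torusPsi, torusDelta_two_right hs hs' ha, torusPhi_two_right ha ha', div_mul_div_comm,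
    mul_comm (s ^ p + _), mul_div_mul_right _ _ ha']

theorem torusThetaHat_two_right [NeZero (2 : F)] (hs : s ≠ 0) (hs4 : s ^ 4 ≠ 1)
    (hsp : s ^ (4 * p) ≠ 1) :
    torusThetaHat p 2 s = ((p : F) * ((s ^ 2) ^ p + (s ^ 2)⁻¹ ^ p) -
      ((s ^ 2) ^ p - (s ^ 2)⁻¹ ^ p) * (s ^ 2 + (s ^ 2)⁻¹) / (s ^ 2 - (s ^ 2)⁻¹)) /
        (2 * (s ^ 2 - (s ^ 2)⁻¹) ^ 2) := by
  obtain ⟨hs₁, hs₂⟩ := mul_ne_zero_iff.1 <|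
    pow_sub_inv_pow_mul_pow_add_inv_pow_ne_zero hs (n := 1) (by simpa using hs4)
  obtain ⟨ha₁, ha₂⟩ := mul_ne_zero_iff.1 <|
    pow_sub_inv_pow_mul_pow_add_inv_pow_ne_zero hs hsp
  rw [pow_one, pow_one] at hs₁ hs₂
  have hs₃ : s ^ 2 - s⁻¹ ^ 2 ≠ 0 := by rw [sq_sub_sq]; exact mul_ne_zero hs₂ hs₁
  have ha₃ : (s ^ p) ^ 2 - (s⁻¹ ^ p) ^ 2 ≠ 0 := by rw [sq_sub_sq]; exact mul_ne_zero ha₂ ha₁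
  have hsq : ∀ x : F, (x ^ 2) ^ p = (x ^ p) ^ 2 := fun x => by ring
  have hsq' : ∀ x : F, x ^ (2 * p) = (x ^ p) ^ 2 := fun x => by ring
  rw [torusThetaHat, torusPsi_two_right hs₁ hs₂ ha₁ ha₂, torusPsi, torusDelta_comm,
    torusDelta_two_right hs₁ hs₂ ha₁, torusPhi, ← inv_pow]
  simp only [hsq, hsq']
  generalize s ^ p = a at *
  generalize s⁻¹ ^ p = b at *
  generalize s⁻¹ = r at *
  field_simp
  ring

theorem torusThetaHat_two_right_closed_forms [NeZero (2 : F)] (hs : s ≠ 0) (hs4 : s ^ 4 ≠ 1)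
    (hsp : s ^ (4 * p) ≠ 1) {t : F} (ht : t = s ^ 2) :
    torusThetaHat p 2 s =
        (t ^ 3 / (t ^ 2 - 1) ^ 3) *
          ((((p : F) - 1) / 2) * (t ^ (p + 1) - t⁻¹ ^ (p + 1)) -
            (((p : F) + 1) / 2) * (t ^ (p - 1) - t⁻¹ ^ (p - 1))) ∧
      torusThetaHat p 2 s =
        (t ^ 2 / (t ^ 2 - 1) ^ 2) *
          ((((p : F) - 1) / 2) * (t ^ p + t⁻¹ ^ p) -
            (t ^ (p - 1) - t⁻¹ ^ (p - 1)) / (t - t⁻¹)) := by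
  have hp : p ≠ 0 := by rintro rfl; exact hsp (pow_zero s)
  rw [torusThetaHat_two_right hs hs4 hsp, ← ht]
  have ht0 : t ≠ 0 := ht ▸ pow_ne_zero 2 hs
  have ht1 : t ^ 2 - 1 ≠ 0 := by rw [ht, ← pow_mul]; exact sub_ne_zero.2 hs4
  -- `p - 1` is truncated subtraction
  obtain ⟨m, rfl⟩ := Nat.exists_eq_succ_of_ne_zero hp
  have ht1' : t - t⁻¹ ≠ 0 := by
    rw [show t - t⁻¹ = (t ^ 2 - 1) / t by field_simp]; exact div_ne_zero ht1 ht0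
  have hm : t ^ m ≠ 0 := pow_ne_zero _ ht0
  simp only [Nat.succ_sub_one, pow_succ, inv_pow, Nat.cast_succ]
  generalize t ^ m = b at *
  constructor <;> field_simp <;> ring

end

theorem torusThetaHat_p2_formula_general (p : ℕ) (hp : 3 ≤ p) :
    ∀ t : RatFunc ℚ, t = (RatFunc.X : RatFunc ℚ) ^ 2 →
      (torusThetaHat p 2 (RatFunc.X : RatFunc ℚ) =
        (t ^ 3 / (t ^ 2 - 1) ^ 3) *
          ((((p : RatFunc ℚ) - 1) / 2) * (t ^ (p + 1) - t⁻¹ ^ (p + 1)) -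
            (((p : RatFunc ℚ) + 1) / 2) * (t ^ (p - 1) - t⁻¹ ^ (p - 1)))) ∧
      (torusThetaHat p 2 (RatFunc.X : RatFunc ℚ) =
        (t ^ 2 / (t ^ 2 - 1) ^ 2) *
          ((((p : RatFunc ℚ) - 1) / 2) * (t ^ p + t⁻¹ ^ p) -
            (t ^ (p - 1) - t⁻¹ ^ (p - 1)) / (t - t⁻¹))) :=
  fun _ ht => torusThetaHat_two_right_closed_forms RatFunc.X_ne_zero
    (RatFunc.X_pow_ne_one four_ne_zero) (RatFunc.X_pow_ne_one (by omega)) ht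

/-- The reduced 2-loop polynomial of the `(p,2)` torus knot, for odd `p ≥ 3`.
In `ℚ(s)`, with `t = s²`,
`Θ̂_{p,2}(s) = (t³/(t²−1)³)·( ((p−1)/2)(t^{p+1} − t^{−p−1}) − ((p+1)/2)(t^{p−1} − t^{−p+1}) )`,
equivalently
`Θ̂_{p,2}(s) = (t²/(t²−1)²)·( ((p−1)/2)(t^p + t^{−p}) − (t^{p−1} − t^{−(p−1)})/(t − t⁻¹) )`. -/
theorem torusThetaHat_p2_formula (p : ℕ) (hp : 3 ≤ p) (hodd : Odd p) :
    ∀ t : RatFunc ℚ, t = (RatFunc.X : RatFunc ℚ) ^ 2 →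
      (torusThetaHat p 2 (RatFunc.X : RatFunc ℚ) =
        (t ^ 3 / (t ^ 2 - 1) ^ 3) *
          ((((p : RatFunc ℚ) - 1) / 2) * (t ^ (p + 1) - t⁻¹ ^ (p + 1)) -
            (((p : RatFunc ℚ) + 1) / 2) * (t ^ (p - 1) - t⁻¹ ^ (p - 1)))) ∧
      (torusThetaHat p 2 (RatFunc.X : RatFunc ℚ) =
        (t ^ 2 / (t ^ 2 - 1) ^ 2) *
          ((((p : RatFunc ℚ) - 1) / 2) * (t ^ p + t⁻¹ ^ p) -
            (t ^ (p - 1) - t⁻¹ ^ (p - 1)) / (t - t⁻¹))) :=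
  torusThetaHat_p2_formula_general p hp
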